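/- Evaluation at the special point: with x₁ = 1 (identity matrix) and x₂ = diag(i, −i) = [[√−1, 0],[0, −√−1]], one has ⟨P(x₁,x₂), (X²+Y²)^{k₂}⟩_{2k₂} = (−2√−1)^{k₁+k₂}·(X₁Y₁)^{k₁} ⊗ (X₂Y₂)^{k₂}, where P is as in the definition of the archimedean test polynomial and the pairing ⟨·,·⟩_{2k₂} is applied in the X,Y-variables. -/

import Mathlib

open MvPolynomial Matrix

/-- The base ring `B = ℂ[X₁,Y₁,X₂,Y₂]` (with `X 0 = X₁`, `X 1 = Y₁`,
`X 2 = X₂`, `X 3 = Y₂`). -/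
noncomputable abbrev B4 := MvPolynomial (Fin 4) ℂ

/-- The outer ring `B[X,Y]`. -/
noncomputable abbrev Outer := MvPolynomial (Fin 2) B4

/-- `p([[a,b],[c,-a]]) = -b X₁² + 2a X₁Y₁ + c Y₁²`. -/
noncomputable def pB (m : Matrix (Fin 2) (Fin 2) ℂ) : B4 :=
  C (-(m 0 1)) * X 0 ^ 2 + C (2 * m 0 0) * X 0 * X 1 + C (m 1 0) * X 1 ^ 2

/-- `J = [[0,1],[-1,0]]`. -/
noncomputable def JmB : Matrix (Fin 2) (Fin 2) B4 := ![![0, 1], ![-1, 0]]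

/-- `W = [[X₁X₂, X₁Y₂],[Y₁X₂, Y₁Y₂]]`. -/
noncomputable def WmB : Matrix (Fin 2) (Fin 2) B4 :=
  ![![X 0 * X 2, X 0 * X 3], ![X 1 * X 2, X 1 * X 3]]

/-- `q(x) = Tr(x* · J · W)`. -/
noncomputable def qB (m : Matrix (Fin 2) (Fin 2) ℂ) : B4 :=
  Matrix.trace (m.adjugate.map (C : ℂ →+* B4) * JmB * WmB)

/-- The special points `x₁ = 1` and `x₂ = diag(√-1, −√-1)`. -/
noncomputable def xOne : Matrix (Fin 2) (Fin 2) ℂ := 1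

noncomputable def xI : Matrix (Fin 2) (Fin 2) ℂ :=
  ![![Complex.I, 0], ![0, -Complex.I]]

/-- `P(x₁,x₂) = Σ_α p(x₁x₂* − ½Tr(x₁x₂*)·1)^{k₁−k₂}·q(x₁)^α·q(x₂)^{2k₂−α}
      ⊗ C(2k₂,α)·X^α·Y^{2k₂−α}`, as a polynomial in `X, Y` with coefficients
in `B = ℂ[X₁,Y₁,X₂,Y₂]`. -/
noncomputable def Pspec (k₁ k₂ : ℕ) : Outer :=
  ∑ α ∈ Finset.range (2 * k₂ + 1),
    C (pB (xOne * xI.adjugate -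
            ((1/2 : ℂ) * Matrix.trace (xOne * xI.adjugate)) •
              (1 : Matrix (Fin 2) (Fin 2) ℂ)) ^ (k₁ - k₂) *
        qB xOne ^ α * qB xI ^ (2 * k₂ - α)) *
      (((2 * k₂).choose α : Outer)) * X 0 ^ α * X 1 ^ (2 * k₂ - α)

/-- The pairing `⟨·,·⟩_{2k₂}` in the `X, Y` variables, with values in `B`. -/
noncomputable def pairB (n : ℕ) (P Q : Outer) : B4 :=
  ∑ i ∈ Finset.range (n + 1),
    (-1 : B4) ^ i * C ((((n.choose i : ℕ) : ℂ))⁻¹) *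
      coeff (Finsupp.single 0 i + Finsupp.single 1 (n - i)) P *
      coeff (Finsupp.single 0 (n - i) + Finsupp.single 1 i) Q

/-!
The terms of `P(1, x₂)` are the binomial expansion of `p^{k₁-k₂} · (q(1) X + q(x₂) Y)^{2k₂}`,
and pairing `(a X + b Y)^n` with a form `Q` of degree `n` gives `Q(b, -a)`: the factor
`(-1)^i / C(n,i)` of the pairing cancels the binomial coefficients. For `Q = (X² + Y²)^{k₂}`
this is `(q(x₂)² + q(1)²)^{k₂}`, and at the special point `p = -2√-1 X₁Y₁` while
`q(x₂)² + q(1)² = (-2√-1)² X₁Y₁X₂Y₂`.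
-/

open Finset

namespace Finsupp

variable {M : Type*} [AddZeroClass M]

theorem single_zero_add_single_one_apply_eq (d : Fin 2 →₀ M) :
    single 0 (d 0) + single 1 (d 1) = d := by
  ext i; fin_cases i <;> simp

theorem single_zero_add_single_one_inj {a b c d : M} :
    single (0 : Fin 2) a + single 1 b = single 0 c + single 1 d ↔ a = c ∧ b = d := by
  refine ⟨fun h => ⟨?_, ?_⟩, fun ⟨hac, hbd⟩ => hac ▸ hbd ▸ rfl⟩
  · simpa using DFunLike.congr_fun h 0
  · simpa using DFunLike.congr_fun h 1

end Finsupp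

namespace MvPolynomial

variable {R : Type*} [CommSemiring R]

open Finsupp in
theorem IsHomogeneous.eval_fin_two_eq_sum_range {Q : MvPolynomial (Fin 2) R} {n : ℕ}
    (hQ : Q.IsHomogeneous n) (x : Fin 2 → R) :
    eval x Q = ∑ i ∈ range (n + 1),
      coeff (single 0 (n - i) + single 1 i) Q * x 0 ^ (n - i) * x 1 ^ i := by
  rw [eval_eq']
  symm
  refine sum_bij_ne_zero (fun i _ _ => single 0 (n - i) + single 1 i) ?_ ?_ ?_ ?_
  · intro i _ h
    exact mem_support_iff.mpr (left_ne_zero_of_mul (left_ne_zero_of_mul h))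
  · intro i _ _ j _ _ h
    exact (single_zero_add_single_one_inj.mp h).2
  · intro d hd hterm
    have hdeg : d 0 + d 1 = n := by
      simpa [weight_apply, sum_fintype, Fin.sum_univ_two] using hQ (mem_support_iff.mp hd)
    subst hdeg
    refine ⟨d 1, mem_range.mpr (by omega), ?_, by simp [single_zero_add_single_one_apply_eq]⟩
    simpa [single_zero_add_single_one_apply_eq, Fin.prod_univ_two, mul_assoc] using hterm
  · intro i _ _
    simp [Fin.prod_univ_two, mul_assoc]

theorem C_mul_X_add_C_mul_X_pow_eq_sum (a b : R) (n : ℕ) :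
    (C a * X 0 + C b * X 1 : MvPolynomial (Fin 2) R) ^ n = ∑ i ∈ range (n + 1),
      monomial (Finsupp.single 0 i + Finsupp.single 1 (n - i))
        (n.choose i * a ^ i * b ^ (n - i)) := by
  rw [add_pow]
  refine sum_congr rfl fun i _ => ?_
  rw [mul_pow, mul_pow, ← C_pow, ← C_pow, C_mul_X_pow_eq_monomial, C_mul_X_pow_eq_monomial,
    monomial_mul, ← map_natCast C, mul_comm, C_mul_monomial, mul_assoc]

theorem coeff_C_mul_X_add_C_mul_X_pow (a b : R) {n i : ℕ} (hi : i ≤ n) :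
    coeff (Finsupp.single 0 i + Finsupp.single 1 (n - i))
        ((C a * X 0 + C b * X 1 : MvPolynomial (Fin 2) R) ^ n) =
      n.choose i * a ^ i * b ^ (n - i) := by
  rw [C_mul_X_add_C_mul_X_pow_eq_sum, coeff_sum,
    sum_eq_single_of_mem i (mem_range.mpr (by omega))]
  · rw [coeff_monomial, if_pos rfl]
  · intro j _ hji
    rw [coeff_monomial, if_neg fun h => hji (Finsupp.single_zero_add_single_one_inj.mp h).1]

end MvPolynomial

theorem pairB_C_mul_linear_pow_eq_eval (c a b : B4) {n : ℕ} {Q : Outer}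
    (hQ : Q.IsHomogeneous n) :
    pairB n (C c * (C a * X 0 + C b * X 1) ^ n) Q = c * eval ![b, -a] Q := by
  rw [pairB, hQ.eval_fin_two_eq_sum_range, mul_sum]
  refine sum_congr rfl fun i hi => ?_
  have hin : i ≤ n := Nat.lt_succ_iff.mp (mem_range.mp hi)
  have hchoose : C ((n.choose i : ℂ)⁻¹) * (n.choose i : B4) = 1 := by
    rw [← map_natCast C, ← map_mul,
      inv_mul_cancel₀ (Nat.cast_ne_zero.mpr (Nat.choose_pos hin).ne'), map_one]
  rw [coeff_C_mul, coeff_C_mul_X_add_C_mul_X_pow a b hin]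
  simp only [cons_val_zero, cons_val_one, neg_pow a]
  linear_combination (c * a ^ i * b ^ (n - i) * (-1) ^ i *
    coeff (Finsupp.single 0 (n - i) + Finsupp.single 1 i) Q) * hchoose

theorem pB_xOne_mul_adjugate_xI_traceless :
    pB (xOne * xI.adjugate - ((1/2 : ℂ) * trace (xOne * xI.adjugate)) •
      (1 : Matrix (Fin 2) (Fin 2) ℂ)) = C (-2 * Complex.I) * X 0 * X 1 := by
  rw [adjugate_fin_two]
  simp [pB, xOne, xI, trace_fin_two]

theorem qB_xOne : qB xOne = X 1 * X 2 - X 0 * X 3 := by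
  simp only [qB, trace_fin_two, Matrix.mul_apply, Fin.sum_univ_two, map_apply]
  simp [xOne, JmB, WmB]
  ring

theorem qB_xI : qB xI = C (-Complex.I) * (X 1 * X 2 + X 0 * X 3) := by
  simp only [qB, trace_fin_two, Matrix.mul_apply, Fin.sum_univ_two, map_apply, adjugate_fin_two]
  simp [xI, JmB, WmB]
  ring

theorem qB_xI_sq_add_qB_xOne_sq :
    qB xI ^ 2 + qB xOne ^ 2 = C ((-2 * Complex.I) ^ 2) * (X 0 * X 1 * (X 2 * X 3)) := by
  have hI : (C (-Complex.I) : B4) ^ 2 = -1 := by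
    rw [← map_pow, neg_sq, Complex.I_sq, map_neg, map_one]
  have h4 : (C ((-2 * Complex.I) ^ 2) : B4) = -4 := by
    rw [show (-2 * Complex.I) ^ 2 = -4 by rw [mul_pow, Complex.I_sq]; norm_num, map_neg, map_ofNat]
  rw [qB_xOne, qB_xI, h4]
  linear_combination (X 1 * X 2 + X 0 * X 3) ^ 2 * hI

theorem Pspec_eq (k₁ k₂ : ℕ) :
    Pspec k₁ k₂ = C ((C (-2 * Complex.I) * X 0 * X 1) ^ (k₁ - k₂)) *
      (C (qB xOne) * X 0 + C (qB xI) * X 1) ^ (2 * k₂) := by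
  rw [Pspec, pB_xOne_mul_adjugate_xI_traceless, add_pow, mul_sum]
  refine sum_congr rfl fun α _ => ?_
  simp only [map_mul, map_pow, mul_pow]
  ring

/-- Evaluation at the special point:
`⟨P(1, diag(i,−i)), (X²+Y²)^{k₂}⟩_{2k₂} = (−2√-1)^{k₁+k₂}·(X₁Y₁)^{k₁}⊗(X₂Y₂)^{k₂}`. -/
theorem Pspec_pairing (k₁ k₂ : ℕ) (hk : k₂ ≤ k₁) :
    pairB (2 * k₂) (Pspec k₁ k₂) ((X 0 ^ 2 + X 1 ^ 2) ^ k₂) =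
      C ((-2 * Complex.I) ^ (k₁ + k₂)) * (X 0 * X 1) ^ k₁ * (X 2 * X 3) ^ k₂ := by
  obtain ⟨e, rfl⟩ : ∃ e, k₁ = e + k₂ := ⟨k₁ - k₂, by omega⟩
  have hQ : ((X 0 ^ 2 + X 1 ^ 2 : Outer) ^ k₂).IsHomogeneous (2 * k₂) :=
    ((isHomogeneous_X_pow 0 2).add (isHomogeneous_X_pow 1 2)).pow k₂
  rw [Pspec_eq, pairB_C_mul_linear_pow_eq_eval _ _ _ hQ]
  simp only [eval_add, eval_X, cons_val_zero, cons_val_one, neg_sq,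
    qB_xI_sq_add_qB_xOne_sq, Nat.add_sub_cancel, map_pow]
  ring
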